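/- Let S ≥ 8 be a real number and for integers α with 0 ≤ α ≤ ⌊S⌋ define δ_α = 1 - α/S. Then the sum over α = 0 to ⌊S⌋ of exp(-δ_α² S / 2) is at most 0.86·S. Consequently, the sum over α = 0 to ⌊S⌋ of (1 - exp(-δ_α² S / 2)) is at least 0.1·S. -/

import Mathlib

open Finset

/-- For real `S ≥ 8` and `δ_α = 1 - α/S`,
`∑_{α=0}^{⌊S⌋} exp(-δ_α² S/2) ≤ 0.86 S`, hence
`∑_{α=0}^{⌊S⌋} (1 - exp(-δ_α² S/2)) ≥ 0.1 S`. -/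
theorem chernoff_sum_bounds (S : ℝ) (hS : 8 ≤ S) :
    (∑ α ∈ Finset.range (⌊S⌋₊ + 1),
        Real.exp (-(1 - (α : ℝ) / S) ^ 2 * S / 2) ≤ 0.86 * S) ∧
    (0.1 * S ≤ ∑ α ∈ Finset.range (⌊S⌋₊ + 1),
        (1 - Real.exp (-(1 - (α : ℝ) / S) ^ 2 * S / 2))) := by
  have hS0 : (0:ℝ) < S := by linarith
  set f : ℕ → ℝ := fun α => Real.exp (-(1 - (α : ℝ) / S) ^ 2 * S / 2) with hf
  set N := ⌊S⌋₊ + 1 with hNdef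
  set m := ⌊S/2⌋₊ + 1 with hmdef
  have hmN : m ≤ N := by
    have : ⌊S/2⌋₊ ≤ ⌊S⌋₊ := Nat.floor_le_floor (by linarith)
    omega
  have hexp1 : Real.exp (-1) ≤ 0.37 := by
    have h1 : Real.exp (-1) * Real.exp 1 = 1 := by rw [← Real.exp_add]; norm_num
    nlinarith [Real.exp_one_gt_d9, Real.exp_pos 1, Real.exp_pos (-1)]
  -- each term ≤ 1
  have hle1 : ∀ α : ℕ, f α ≤ 1 := by
    intro α
    rw [hf]
    simp only [Real.exp_le_one_iff]
    have : (0:ℝ) ≤ (1 - (α : ℝ) / S) ^ 2 * S := by positivity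
    linarith
  -- small α: term ≤ 0.37
  have hsmall : ∀ α ∈ Finset.range m, f α ≤ 0.37 := by
    intro α hα
    rw [Finset.mem_range] at hα
    have hα' : (α : ℝ) ≤ S / 2 := by
      have h1 : α ≤ ⌊S/2⌋₊ := by omega
      have h2 : ((⌊S/2⌋₊ : ℕ) : ℝ) ≤ S / 2 := Nat.floor_le (by linarith)
      calc (α : ℝ) ≤ (⌊S/2⌋₊ : ℝ) := by exact_mod_cast h1
        _ ≤ S / 2 := h2
    have hdiv : (α : ℝ) / S ≤ 1 / 2 := by
      rw [div_le_div_iff₀ hS0 (by norm_num)]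
      linarith
    have hδ : (1:ℝ)/2 ≤ 1 - (α : ℝ) / S := by linarith
    have hδ2 : (1:ℝ)/4 ≤ (1 - (α : ℝ) / S) ^ 2 := by nlinarith
    have hexpo : -(1 - (α : ℝ) / S) ^ 2 * S / 2 ≤ -1 := by nlinarith
    calc f α ≤ Real.exp (-1) := Real.exp_le_exp.mpr hexpo
      _ ≤ 0.37 := hexp1
  have hsum1 : ∑ α ∈ Finset.range m, f α ≤ (m : ℝ) * 0.37 := by
    calc ∑ α ∈ Finset.range m, f α ≤ ∑ α ∈ Finset.range m, (0.37:ℝ) :=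
          Finset.sum_le_sum hsmall
      _ = (m : ℝ) * 0.37 := by simp [mul_comm]
  have hsum2 : ∑ α ∈ Finset.Ico m N, f α ≤ ((N : ℝ) - m) := by
    calc ∑ α ∈ Finset.Ico m N, f α ≤ ∑ α ∈ Finset.Ico m N, (1:ℝ) :=
          Finset.sum_le_sum (fun α _ => hle1 α)
      _ = ((N - m : ℕ) : ℝ) := by simp [Nat.card_Ico]
      _ = (N : ℝ) - m := by
          have : (m:ℝ) ≤ (N:ℝ) := by exact_mod_cast hmN
          push_cast [Nat.cast_sub hmN]; ring
  have hsplit : ∑ α ∈ Finset.range N, f α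
      = (∑ α ∈ Finset.range m, f α) + ∑ α ∈ Finset.Ico m N, f α :=
    (Finset.sum_range_add_sum_Ico f hmN).symm
  have hmlb : S / 2 < (m : ℝ) := by
    rw [hmdef]; push_cast; exact Nat.lt_floor_add_one _
  have hNub : (N : ℝ) ≤ S + 1 := by
    rw [hNdef]; push_cast
    have := Nat.floor_le (le_of_lt hS0)
    linarith
  have hNlb : S < (N : ℝ) := by
    rw [hNdef]; push_cast; exact Nat.lt_floor_add_one _
  have hmain : ∑ α ∈ Finset.range N, f α ≤ 0.86 * S := by
    rw [hsplit]
    have h1 : (m : ℝ) * 0.37 + ((N : ℝ) - m) ≤ 0.86 * S := by nlinarith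
    linarith
  refine ⟨hmain, ?_⟩
  have hsub : ∑ α ∈ Finset.range N, (1 - f α)
      = (N : ℝ) - ∑ α ∈ Finset.range N, f α := by
    rw [Finset.sum_sub_distrib]
    simp
  rw [hsub]
  linarith
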